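/- arXiv:2410.08051 — 6 statements merged into one kernel-verified Lean document; each statement's English description precedes it below -/
import Mathlib

section
/- Let A and B be 2^n × 2^n unitary matrices over ℂ and let 0 ≤ ε₁ < 1 and 0 ≤ ε₂ < 1 be real numbers such that (1/2^n)|Tr(A)| ≥ 1 − ε₁ and (1/2^n)·Re(Tr(B)) ≥ 1 − ε₂. Then (1/2^n)|Tr(A B)| ≥ 1 − ε₁ − √(2ε₂). -/
open Matrix

/-!
Write `Tr (A * B) = Tr A + Tr (A * (B - 1))`. The second term is the Hilbert–Schmidt inner
product of `Aᴴ` and `B - 1`, so by Cauchy–Schwarz its modulus is at most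
`√(Tr (A * Aᴴ)) * √(Tr ((B - 1)ᴴ * (B - 1))) = √N * √(2 * (N - Re Tr B))` for unitary `A`, `B`
of size `N`, and the trace hypothesis on `B` bounds this by `N * √(2 * ε₂)`.
-/

namespace Matrix

variable {𝕜 m n : Type*} [RCLike 𝕜] [Fintype m] [Fintype n]

theorem inner_toLp_vec (X Y : Matrix m n 𝕜) :
    inner 𝕜 (WithLp.toLp 2 X.vec) (WithLp.toLp 2 Y.vec) = (Xᴴ * Y).trace := by
  rw [EuclideanSpace.inner_eq_star_dotProduct, dotProduct_comm, star_vec_dotProduct_vec]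

theorem norm_trace_conjTranspose_mul_le (X Y : Matrix m n 𝕜) :
    ‖(Xᴴ * Y).trace‖ ≤
      √(RCLike.re (Xᴴ * X).trace) * √(RCLike.re (Yᴴ * Y).trace) := by
  simpa only [← inner_toLp_vec, norm_eq_sqrt_re_inner (𝕜 := 𝕜)]
    using norm_inner_le_norm (𝕜 := 𝕜) (WithLp.toLp 2 X.vec) (WithLp.toLp 2 Y.vec)

variable [DecidableEq n]

theorem re_trace_mul_conjTranspose_of_mem_unitaryGroup {A : Matrix n n 𝕜}
    (hA : A ∈ unitaryGroup n 𝕜) : RCLike.re (A * Aᴴ).trace = Fintype.card n := by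
  rw [← star_eq_conjTranspose, mem_unitaryGroup_iff.mp hA, trace_one, RCLike.natCast_re]

theorem re_trace_conjTranspose_sub_one_mul_sub_one_of_mem_unitaryGroup {B : Matrix n n 𝕜}
    (hB : B ∈ unitaryGroup n 𝕜) :
    RCLike.re ((B - 1)ᴴ * (B - 1)).trace = 2 * (Fintype.card n - RCLike.re B.trace) := by
  have hBB : Bᴴ * B = 1 := mem_unitaryGroup_iff'.mp hB
  have hexpand : (B - 1)ᴴ * (B - 1) = 1 + 1 - Bᴴ - B := by
    rw [conjTranspose_sub, conjTranspose_one, sub_mul, mul_sub, mul_sub, hBB]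
    noncomm_ring
  rw [hexpand, trace_sub, trace_sub, trace_add, trace_conjTranspose, trace_one]
  simp only [RCLike.star_def, map_sub, map_add, RCLike.natCast_re, RCLike.conj_re]
  ring

theorem norm_trace_sub_le_norm_trace_mul_of_mem_unitaryGroup {A B : Matrix n n 𝕜}
    (hA : A ∈ unitaryGroup n 𝕜) (hB : B ∈ unitaryGroup n 𝕜) :
    ‖A.trace‖ - √(Fintype.card n) * √(2 * (Fintype.card n - RCLike.re B.trace)) ≤
      ‖(A * B).trace‖ := by
  have hsplit : A.trace = (A * B).trace - (A * (B - 1)).trace := by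
    rw [mul_sub, mul_one, trace_sub]; ring
  have hCS := norm_trace_conjTranspose_mul_le Aᴴ (B - 1)
  rw [conjTranspose_conjTranspose, re_trace_mul_conjTranspose_of_mem_unitaryGroup hA,
    re_trace_conjTranspose_sub_one_mul_sub_one_of_mem_unitaryGroup hB] at hCS
  linarith [hsplit ▸ norm_sub_le (A * B).trace (A * (B - 1)).trace]

end Matrix

theorem abs_trace_mul_ge_of_traces_large_general (n : ℕ) (ε₁ ε₂ : ℝ)
    (A B : Matrix (Fin (2 ^ n)) (Fin (2 ^ n)) ℂ)
    (hA : A ∈ Matrix.unitaryGroup (Fin (2 ^ n)) ℂ)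
    (hB : B ∈ Matrix.unitaryGroup (Fin (2 ^ n)) ℂ)
    (hTrA : 1 - ε₁ ≤ (1 / 2 ^ n) * ‖A.trace‖)
    (hTrB : 1 - ε₂ ≤ (1 / 2 ^ n) * B.trace.re) :
    1 - ε₁ - Real.sqrt (2 * ε₂) ≤ (1 / 2 ^ n) * ‖(A * B).trace‖ := by
  have key := norm_trace_sub_le_norm_trace_mul_of_mem_unitaryGroup hA hB
  set N : ℝ := 2 ^ n
  have hN : 0 < N := by positivity
  have hcard : (Fintype.card (Fin (2 ^ n)) : ℝ) = N := by simp [N]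
  rw [hcard, RCLike.re_to_complex] at key
  rw [one_div_mul_eq_div, le_div_iff₀ hN] at hTrA hTrB ⊢
  have hsqrt : √N * √(2 * (N - B.trace.re)) ≤ N * √(2 * ε₂) := calc
    √N * √(2 * (N - B.trace.re)) ≤ √N * √(N * (2 * ε₂)) :=
      mul_le_mul_of_nonneg_left (Real.sqrt_le_sqrt (by linarith)) (Real.sqrt_nonneg _)
    _ = N * √(2 * ε₂) := by rw [Real.sqrt_mul hN.le, ← mul_assoc, Real.mul_self_sqrt hN.le]
  linarith

theorem abs_trace_mul_ge_of_traces_large (n : ℕ) (ε₁ ε₂ : ℝ)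
    (hε₁ : 0 ≤ ε₁) (hε₁' : ε₁ < 1) (hε₂ : 0 ≤ ε₂) (hε₂' : ε₂ < 1)
    (A B : Matrix (Fin (2 ^ n)) (Fin (2 ^ n)) ℂ)
    (hA : A ∈ Matrix.unitaryGroup (Fin (2 ^ n)) ℂ)
    (hB : B ∈ Matrix.unitaryGroup (Fin (2 ^ n)) ℂ)
    (hTrA : 1 - ε₁ ≤ (1 / 2 ^ n) * ‖A.trace‖)
    (hTrB : 1 - ε₂ ≤ (1 / 2 ^ n) * B.trace.re) :
    1 - ε₁ - Real.sqrt (2 * ε₂) ≤ (1 / 2 ^ n) * ‖(A * B).trace‖ :=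
  abs_trace_mul_ge_of_traces_large_general n ε₁ ε₂ A B hA hB hTrA hTrB
end

section
/- Let A and B be 2^n × 2^n unitary matrices over ℂ and let 0 ≤ ε₁ < 1 and 0 ≤ ε₂ < 1 be real numbers such that (1/2^n)|Tr(A)| ≥ 1 − ε₁ and (1/2^n)·Re(Tr(B)) ≥ 1 − ε₂. If moreover B is a diagonal matrix whose diagonal entries all lie in {1, −1}, then (1/2^n)|Tr(A B)| ≥ 1 − ε₁ − 2ε₂. -/
/-! `Tr A - Tr (A B) = ∑ᵢ Aᵢᵢ (1 - dᵢ)`. The entries of a unitary matrix have norm at most `1`,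
and `‖1 - dᵢ‖ = 1 - Re dᵢ` for `dᵢ = ±1`, so this difference has norm at most
`2ⁿ - Re Tr B ≤ ε₂ 2ⁿ`. -/

open Matrix

namespace Matrix

variable {ι : Type*} [Fintype ι] [DecidableEq ι]

theorem norm_trace_sub_trace_mul_diagonal_le {A : Matrix ι ι ℂ}
    (hA : A ∈ unitaryGroup ι ℂ) (d : ι → ℂ) :
    ‖A.trace - (A * diagonal d).trace‖ ≤ ∑ i, ‖1 - d i‖ := by
  have hdiff : A.trace - (A * diagonal d).trace = ∑ i, A i i * (1 - d i) := by
    simp only [trace, diag, mul_diagonal, ← Finset.sum_sub_distrib, mul_sub, mul_one]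
  calc ‖A.trace - (A * diagonal d).trace‖
      ≤ ∑ i, ‖A i i‖ * ‖1 - d i‖ := by
        rw [hdiff]
        exact (norm_sum_le _ _).trans_eq (by simp only [norm_mul])
    _ ≤ ∑ i, ‖1 - d i‖ := Finset.sum_le_sum fun i _ =>
        mul_le_of_le_one_left (norm_nonneg _) (entry_norm_bound_of_unitary hA i i)

theorem sum_norm_one_sub_eq_of_sign {d : ι → ℂ} (hd : ∀ i, d i = 1 ∨ d i = -1) :
    ∑ i, ‖1 - d i‖ = Fintype.card ι - (diagonal d).trace.re := by
  have hsign : ∀ i, ‖1 - d i‖ = 1 - (d i).re := fun i => by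
    rcases hd i with h | h <;> norm_num [h]
  simp only [hsign, Finset.sum_sub_distrib, trace_diagonal, Complex.re_sum, Finset.sum_const,
    Finset.card_univ, nsmul_eq_mul, mul_one]

theorem norm_trace_sub_trace_mul_diagonal_sign_le {A : Matrix ι ι ℂ}
    (hA : A ∈ unitaryGroup ι ℂ) {d : ι → ℂ} (hd : ∀ i, d i = 1 ∨ d i = -1) :
    ‖A.trace - (A * diagonal d).trace‖ ≤ Fintype.card ι - (diagonal d).trace.re :=
  sum_norm_one_sub_eq_of_sign hd ▸ norm_trace_sub_trace_mul_diagonal_le hA d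

end Matrix

theorem abs_trace_mul_ge_of_traces_large_diagonal_general (n : ℕ) (ε₁ ε₂ : ℝ)
    (A B : Matrix (Fin (2 ^ n)) (Fin (2 ^ n)) ℂ)
    (hA : A ∈ Matrix.unitaryGroup (Fin (2 ^ n)) ℂ)
    (hTrA : 1 - ε₁ ≤ (1 / 2 ^ n) * ‖A.trace‖)
    (hTrB : 1 - ε₂ ≤ (1 / 2 ^ n) * B.trace.re)
    (d : Fin (2 ^ n) → ℂ) (hBd : B = Matrix.diagonal d)
    (hd : ∀ i, d i = 1 ∨ d i = -1) :
    1 - ε₁ - 2 * ε₂ ≤ (1 / 2 ^ n) * ‖(A * B).trace‖ := by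
  subst hBd
  set c : ℝ := 1 / 2 ^ n
  have hc : 0 ≤ c := by positivity
  have hcN : c * (Fintype.card (Fin (2 ^ n)) : ℝ) = 1 := by
    simp [c]
  have hflip := norm_trace_sub_trace_mul_diagonal_sign_le hA hd
  have hTrAB : c * ‖A.trace‖ - c * (Fintype.card (Fin (2 ^ n)) - (diagonal d).trace.re)
      ≤ c * ‖(A * diagonal d).trace‖ := by
    rw [← mul_sub]
    gcongr
    linarith [norm_sub_norm_le A.trace (A * diagonal d).trace]
  -- `ε₂ ≥ 0` because `Re Tr B ≤ 2^n`
  have hTrB_le : c * (diagonal d).trace.re ≤ 1 :=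
    hcN ▸ mul_le_mul_of_nonneg_left (by linarith [norm_nonneg (A.trace - (A * diagonal d).trace)]) hc
  rw [mul_sub, hcN] at hTrAB
  linarith

theorem abs_trace_mul_ge_of_traces_large_diagonal (n : ℕ) (ε₁ ε₂ : ℝ)
    (hε₁ : 0 ≤ ε₁) (hε₁' : ε₁ < 1) (hε₂ : 0 ≤ ε₂) (hε₂' : ε₂ < 1)
    (A B : Matrix (Fin (2 ^ n)) (Fin (2 ^ n)) ℂ)
    (hA : A ∈ Matrix.unitaryGroup (Fin (2 ^ n)) ℂ)
    (hB : B ∈ Matrix.unitaryGroup (Fin (2 ^ n)) ℂ)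
    (hTrA : 1 - ε₁ ≤ (1 / 2 ^ n) * ‖A.trace‖)
    (hTrB : 1 - ε₂ ≤ (1 / 2 ^ n) * B.trace.re)
    (d : Fin (2 ^ n) → ℂ) (hBd : B = Matrix.diagonal d)
    (hd : ∀ i, d i = 1 ∨ d i = -1) :
    1 - ε₁ - 2 * ε₂ ≤ (1 / 2 ^ n) * ‖(A * B).trace‖ :=
  abs_trace_mul_ge_of_traces_large_diagonal_general n ε₁ ε₂ A B hA hTrA hTrB d hBd hd
end

section
/- Let B be a 2^n × 2^n unitary matrix over ℂ and let 0 ≤ ε be a real number such that (1/2^n)·Re(Tr(B)) ≥ 1 − ε. Then (1/2^n)‖B − I‖₁ ≤ √(2ε), where I is the 2^n × 2^n identity matrix. -/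
/-!
The singular values `σᵢ` of `B - 1` are the square roots of the eigenvalues of `(B - 1)ᴴ (B - 1)`,
so `∑ σᵢ² = Re tr ((B - 1)ᴴ (B - 1)) = 2 (N - Re tr B)` when `B` is unitary of size `N`.
Cauchy–Schwarz `∑ σᵢ ≤ √N · √(∑ σᵢ²)` then gives `‖B - 1‖₁ / N ≤ √(2 (1 - Re tr B / N))`.
-/

open Matrix
open scoped ComplexOrder

/-- The trace norm (Schatten 1-norm) of a complex square matrix: the trace of the
positive semidefinite square root of `Mᴴ * M`. -/
noncomputable def traceNorm {m : Type*} [Fintype m] [DecidableEq m] (M : Matrix m m ℂ) : ℝ :=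
  (((Matrix.posSemidef_conjTranspose_mul_self M).1.eigenvectorUnitary.1 *
      diagonal (((↑) : ℝ → ℂ) ∘ Real.sqrt ∘ (Matrix.posSemidef_conjTranspose_mul_self M).1.eigenvalues) *
      (star (Matrix.posSemidef_conjTranspose_mul_self M).1.eigenvectorUnitary : Matrix m m ℂ)).trace).re

namespace Matrix

variable {m : Type*} [Fintype m] [DecidableEq m]

lemma traceNorm_eq_sum_sqrt_eigenvalues (M : Matrix m m ℂ) :
    traceNorm M = ∑ i, √((posSemidef_conjTranspose_mul_self M).1.eigenvalues i) := by
  rw [traceNorm, trace_mul_cycle, UnitaryGroup.star_mul_self, Matrix.one_mul, trace_diagonal,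
    Complex.re_sum]
  rfl

lemma traceNorm_le_sqrt_card_mul_sqrt_re_trace (M : Matrix m m ℂ) :
    traceNorm M ≤ √(Fintype.card m) * √(Mᴴ * M).trace.re := by
  have hMM := posSemidef_conjTranspose_mul_self M
  have hre : (Mᴴ * M).trace.re = ∑ i, hMM.1.eigenvalues i := by
    simp [hMM.1.trace_eq_sum_eigenvalues, Complex.re_sum]
  rw [traceNorm_eq_sum_sqrt_eigenvalues, hre]
  -- Cauchy–Schwarz against the all-ones vector
  simpa using Real.sum_sqrt_mul_sqrt_le Finset.univ (fun _ ↦ zero_le_one) hMM.eigenvalues_nonneg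

lemma re_trace_conjTranspose_mul_self_sub_one {B : Matrix m m ℂ} (hB : B ∈ unitaryGroup m ℂ) :
    ((B - 1)ᴴ * (B - 1)).trace.re = 2 * (Fintype.card m - B.trace.re) := by
  have hBB : Bᴴ * B = 1 := hB.1
  simp only [conjTranspose_sub, conjTranspose_one, sub_mul, mul_sub, one_mul, mul_one, hBB,
    trace_sub, trace_one, trace_conjTranspose, Complex.sub_re, Complex.natCast_re,
    Complex.star_def, Complex.conj_re]
  ring

lemma traceNorm_sub_one_div_card_le {B : Matrix m m ℂ} (hB : B ∈ unitaryGroup m ℂ) :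
    traceNorm (B - 1) / Fintype.card m ≤ √(2 * (1 - B.trace.re / Fintype.card m)) := by
  set c : ℝ := (Fintype.card m : ℝ)
  rcases (show 0 ≤ c from Nat.cast_nonneg _).eq_or_lt with hc | hc
  · rw [← hc, div_zero]
    exact Real.sqrt_nonneg _
  rw [div_le_iff₀ hc]
  calc traceNorm (B - 1)
      ≤ √c * √(2 * (c - B.trace.re)) := by
        rw [← re_trace_conjTranspose_mul_self_sub_one hB]
        exact traceNorm_le_sqrt_card_mul_sqrt_re_trace _
    _ = √(2 * (1 - B.trace.re / c)) * c := by
        rw [show 2 * (c - B.trace.re) = c * (2 * (1 - B.trace.re / c)) by field_simp,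
          Real.sqrt_mul hc.le, ← mul_assoc, Real.mul_self_sqrt hc.le, mul_comm]

end Matrix

theorem traceNorm_sub_one_le_of_re_trace_large_general (n : ℕ) (ε : ℝ)
    (B : Matrix (Fin (2 ^ n)) (Fin (2 ^ n)) ℂ)
    (hB : B ∈ Matrix.unitaryGroup (Fin (2 ^ n)) ℂ)
    (hTrB : 1 - ε ≤ (1 / 2 ^ n) * B.trace.re) :
    (1 / 2 ^ n) * traceNorm (B - 1) ≤ Real.sqrt (2 * ε) := by
  have hcard : (Fintype.card (Fin (2 ^ n)) : ℝ) = 2 ^ n := by simp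
  have h := traceNorm_sub_one_div_card_le hB
  rw [hcard] at h
  calc (1 / 2 ^ n) * traceNorm (B - 1) = traceNorm (B - 1) / 2 ^ n := by ring
    _ ≤ √(2 * (1 - B.trace.re / 2 ^ n)) := h
    _ ≤ √(2 * ε) := by
        gcongr
        linarith [show B.trace.re / 2 ^ n = (1 / 2 ^ n) * B.trace.re by ring]

theorem traceNorm_sub_one_le_of_re_trace_large (n : ℕ) (ε : ℝ) (hε : 0 ≤ ε)
    (B : Matrix (Fin (2 ^ n)) (Fin (2 ^ n)) ℂ)
    (hB : B ∈ Matrix.unitaryGroup (Fin (2 ^ n)) ℂ)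
    (hTrB : 1 - ε ≤ (1 / 2 ^ n) * B.trace.re) :
    (1 / 2 ^ n) * traceNorm (B - 1) ≤ Real.sqrt (2 * ε) :=
  traceNorm_sub_one_le_of_re_trace_large_general n ε B hB hTrB
end

section
/- Let ω_f ≠ ω_g be two elements of {0,1}^n and let f, g : {0,1}^n → {−1,1} be defined by f(x) = −1 if and only if x = ω_f, and g(x) = −1 if and only if x = ω_g. Let D_f and D_g be the 2^n × 2^n diagonal matrices with (D_f)_{x,x} = f(x) and (D_g)_{x,x} = g(x). Let r ≥ 1 and let V₀, V₁, …, V_r be 2^n × 2^n unitary matrices over ℂ, and define A = V₀·D_f·V₁·D_f·V₂⋯D_f·V_r and A' = V₀·D_g·V₁·D_g·V₂⋯D_g·V_r (the alternating products containing r copies of the oracle). Then (1/2^n)|Tr(Aᴴ A')| ≥ 1 − (8r − 4)/2^n. -/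
/-!
Hybrid argument: replace the oracle `D_f` by `D_g` one query at a time. Since
`D_ω = 1 - 2 E_ωω`, one swap changes `Tr (W D)` for a unitary `W` by
`2 (W_{ω_f ω_f} - W_{ω_g ω_g})`, of modulus at most `4` because the entries of a unitary
matrix have modulus at most `1`. Hence `|Tr (Aᴴ A')| ≥ Tr (Aᴴ A) - 4r = 2ⁿ - 4r`,
which is at least `2ⁿ - (8r - 4)` once `r ≥ 1`.
-/

open Matrix

namespace Matrix

variable {m 𝕜 : Type*} [DecidableEq m] [RCLike 𝕜]

def phaseOracle (ω : m) : Matrix m m 𝕜 :=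
  diagonal fun x => if x = ω then -1 else 1

theorem phaseOracle_eq_one_sub_single (ω : m) :
    (phaseOracle ω : Matrix m m 𝕜) = 1 - single ω ω 2 := by
  ext i j
  by_cases hij : i = j <;> by_cases hi : i = ω <;>
    simp_all [phaseOracle, single_apply, eq_comm]
  norm_num

variable [Fintype m]

theorem phaseOracle_mem_unitaryGroup (ω : m) :
    (phaseOracle ω : Matrix m m 𝕜) ∈ unitaryGroup m 𝕜 := by
  rw [mem_unitaryGroup_iff', star_eq_conjTranspose, phaseOracle, diagonal_conjTranspose,
    diagonal_mul_diagonal, ← diagonal_one]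
  congr 1
  ext x
  by_cases h : x = ω <;> simp [h]

theorem trace_mul_phaseOracle (W : Matrix m m 𝕜) (ω : m) :
    trace (W * phaseOracle ω) = trace W - 2 * W ω ω := by
  simp [phaseOracle_eq_one_sub_single, mul_sub, trace_sub, trace_mul_single, mul_comm]

theorem norm_trace_mul_phaseOracle_sub_le {W : Matrix m m 𝕜} (hW : W ∈ unitaryGroup m 𝕜)
    (a b : m) : ‖trace (W * phaseOracle a) - trace (W * phaseOracle b)‖ ≤ 4 := by
  rw [trace_mul_phaseOracle, trace_mul_phaseOracle, sub_sub_sub_cancel_left, ← mul_sub]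
  calc ‖(2 : 𝕜) * (W b b - W a a)‖ ≤ 2 * (‖W b b‖ + ‖W a a‖) := by
        rw [norm_mul, RCLike.norm_two]; gcongr; exact norm_sub_le _ _
    _ ≤ 2 * (1 + 1) := by
        gcongr <;> exact entry_norm_bound_of_unitary hW _ _
    _ = 4 := by norm_num

theorem norm_trace_mul_list_prod_sub_le {ι : Type*} {D E : Matrix m m 𝕜}
    (hD : D ∈ unitaryGroup m 𝕜) (hE : E ∈ unitaryGroup m 𝕜) {c : ℝ}
    (hDE : ∀ W ∈ unitaryGroup m 𝕜, ‖trace (W * D) - trace (W * E)‖ ≤ c)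
    (V : ι → Matrix m m 𝕜) (l : List ι) (hV : ∀ i ∈ l, V i ∈ unitaryGroup m 𝕜)
    {U : Matrix m m 𝕜} (hU : U ∈ unitaryGroup m 𝕜) :
    ‖trace (U * (l.map fun i => D * V i).prod) - trace (U * (l.map fun i => E * V i).prod)‖
      ≤ l.length * c := by
  induction l generalizing U with
  | nil => simp
  | cons i l ih =>
    simp only [List.forall_mem_cons] at hV
    simp only [List.map_cons, List.prod_cons, List.length_cons]
    set P := (l.map fun i => D * V i).prod
    set Q := (l.map fun i => E * V i).prod
    have hQ : Q ∈ unitaryGroup m 𝕜 :=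
      Submonoid.list_prod_mem _ (by simpa using fun j hj => mul_mem hE (hV.2 j hj))
    have hcycle (X : Matrix m m 𝕜) : trace (U * (X * V i * Q)) = trace (V i * Q * U * X) := by
      simpa only [Matrix.mul_assoc] using trace_mul_comm (U * X) (V i * Q)
    -- Swap the oracle in the first query; the remaining queries are handled by induction.
    have hsplit : trace (U * (D * V i * P)) - trace (U * (E * V i * Q))
        = (trace (U * D * V i * P) - trace (U * D * V i * Q))
          + (trace (V i * Q * U * D) - trace (V i * Q * U * E)) := by
      rw [← hcycle, ← hcycle]
      simp only [Matrix.mul_assoc]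
      ring
    rw [hsplit]
    calc _ ≤ ‖trace (U * D * V i * P) - trace (U * D * V i * Q)‖
          + ‖trace (V i * Q * U * D) - trace (V i * Q * U * E)‖ := norm_add_le _ _
      _ ≤ l.length * c + c := add_le_add (ih hV.2 (mul_mem (mul_mem hU hD) hV.1))
          (hDE _ (mul_mem (mul_mem hV.1 hQ) hU))
      _ = _ := by push_cast; ring

end Matrix

theorem grover_oracle_fidelity_lower_bound_general (n r : ℕ) (hr : 1 ≤ r)
    (ωf ωg : Fin n → ZMod 2)
    (Df Dg : Matrix (Fin n → ZMod 2) (Fin n → ZMod 2) ℂ)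
    (hDf : Df = Matrix.diagonal fun x => if x = ωf then (-1 : ℂ) else 1)
    (hDg : Dg = Matrix.diagonal fun x => if x = ωg then (-1 : ℂ) else 1)
    (V : ℕ → Matrix (Fin n → ZMod 2) (Fin n → ZMod 2) ℂ)
    (hV : ∀ i ≤ r, V i ∈ Matrix.unitaryGroup (Fin n → ZMod 2) ℂ)
    (A A' : Matrix (Fin n → ZMod 2) (Fin n → ZMod 2) ℂ)
    (hA : A = V 0 * ((List.range r).map fun i => Df * V (i + 1)).prod)
    (hA' : A' = V 0 * ((List.range r).map fun i => Dg * V (i + 1)).prod) :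
    1 - (8 * (r : ℝ) - 4) / 2 ^ n ≤ (1 / 2 ^ n) * ‖(Aᴴ * A').trace‖ := by
  change Df = phaseOracle ωf at hDf
  change Dg = phaseOracle ωg at hDg
  subst hDf hDg
  have hVsucc : ∀ i ∈ List.range r, V (i + 1) ∈ unitaryGroup _ ℂ :=
    fun i hi => hV _ (List.mem_range.mp hi)
  set F := ((List.range r).map fun i => phaseOracle ωf * V (i + 1)).prod
  set G := ((List.range r).map fun i => phaseOracle ωg * V (i + 1)).prod
  have hF : F ∈ unitaryGroup _ ℂ := Submonoid.list_prod_mem _ <| by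
    simpa using fun i hi => mul_mem (phaseOracle_mem_unitaryGroup ωf) (hVsucc i hi)
  have hAA' : Aᴴ * A' = Fᴴ * G := by
    have h0 : (V 0)ᴴ * V 0 = 1 := mem_unitaryGroup_iff'.mp (hV 0 r.zero_le)
    rw [hA, hA', conjTranspose_mul, Matrix.mul_assoc, ← Matrix.mul_assoc (V 0)ᴴ, h0,
      Matrix.one_mul]
  have hFF : ‖trace (Fᴴ * F)‖ = 2 ^ n := by
    rw [← star_eq_conjTranspose, mem_unitaryGroup_iff'.mp hF, trace_one]
    simp [ZMod.card]
  have hhybrid : ‖trace (Fᴴ * F) - trace (Fᴴ * G)‖ ≤ r * 4 := by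
    have := norm_trace_mul_list_prod_sub_le (phaseOracle_mem_unitaryGroup ωf)
      (phaseOracle_mem_unitaryGroup ωg) (fun W hW => norm_trace_mul_phaseOracle_sub_le hW ωf ωg)
      (fun i => V (i + 1)) (List.range r) hVsucc (Unitary.star_mem hF)
    rwa [List.length_range, star_eq_conjTranspose] at this
  have hFG : 2 ^ n - r * 4 ≤ ‖trace (Fᴴ * G)‖ := by
    have := norm_sub_norm_le (trace (Fᴴ * F)) (trace (Fᴴ * F) - trace (Fᴴ * G))
    rw [sub_sub_cancel, hFF] at this
    linarith
  have hr' : (1 : ℝ) ≤ r := by exact_mod_cast hr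
  rw [hAA', one_div_mul_eq_div, le_div_iff₀ (by positivity), sub_mul,
    div_mul_cancel₀ _ (by positivity)]
  linarith

theorem grover_oracle_fidelity_lower_bound (n r : ℕ) (hr : 1 ≤ r)
    (ωf ωg : Fin n → ZMod 2) (hω : ωf ≠ ωg)
    (Df Dg : Matrix (Fin n → ZMod 2) (Fin n → ZMod 2) ℂ)
    (hDf : Df = Matrix.diagonal fun x => if x = ωf then (-1 : ℂ) else 1)
    (hDg : Dg = Matrix.diagonal fun x => if x = ωg then (-1 : ℂ) else 1)
    (V : ℕ → Matrix (Fin n → ZMod 2) (Fin n → ZMod 2) ℂ)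
    (hV : ∀ i ≤ r, V i ∈ Matrix.unitaryGroup (Fin n → ZMod 2) ℂ)
    (A A' : Matrix (Fin n → ZMod 2) (Fin n → ZMod 2) ℂ)
    (hA : A = V 0 * ((List.range r).map fun i => Df * V (i + 1)).prod)
    (hA' : A' = V 0 * ((List.range r).map fun i => Dg * V (i + 1)).prod) :
    1 - (8 * (r : ℝ) - 4) / 2 ^ n ≤ (1 / 2 ^ n) * ‖(Aᴴ * A').trace‖ :=
  grover_oracle_fidelity_lower_bound_general n r hr ωf ωg Df Dg hDf hDg V hV A A' hA hA'
end

section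
/- Let V = (ZMod 2)^n, let C be any 2^n × 2^n complex matrix indexed by V, and let f : V × V → ℝ. For s ∈ V let Z^s be the diagonal matrix with (Z^s)_{w,w} = (−1)^{s·w}, and for (s,s') ∈ V × V let f̂_{s,s'} = 2^{−2n} Σ_{w,z ∈ V} f(w,z)·(−1)^{s·w}·(−1)^{s'·z}. Then (1/2^n) Σ_{w,z ∈ V} |C_{z,w}|² · f(w,z) = Σ_{s,s' ∈ V} f̂_{s,s'} · (1/2^n)·Tr(Z^s · Cᴴ · Z^{s'} · C). -/
/-!
The trace `Tr(Z^s Cᴴ Z^{s'} C)` is the Walsh transform of `(w, z) ↦ |C_{z,w}|²` at `(s, s')`,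
so the identity is Parseval's identity for the Walsh transform on `V × V`. Its matrix `H ⊗ H`
satisfies `(H ⊗ H)ᵀ (H ⊗ H) = 2^{2n} • 1`, by the orthogonality relation
`∑ s, (-1)^{s·v} = 2^n [v = 0]`.
-/

open Matrix
open scoped ComplexOrder Kronecker

/-- The real sign `(-1)^a` of an element `a : ZMod 2`. -/
def signOf (a : ZMod 2) : ℝ := if a = 0 then 1 else -1

lemma zmod_two_eq_zero_or_eq_one (a : ZMod 2) : a = 0 ∨ a = 1 := by revert a; decide

lemma signOf_add (a b : ZMod 2) : signOf (a + b) = signOf a * signOf b := by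
  rcases zmod_two_eq_zero_or_eq_one a with rfl | rfl <;>
    rcases zmod_two_eq_zero_or_eq_one b with rfl | rfl <;>
    simp [signOf, CharTwo.add_self_eq_zero]

lemma dotProduct_mulVec_mulVec_eq_of_transpose_mul_self {m n R : Type*} [Fintype m] [Fintype n]
    [DecidableEq n] [CommSemiring R] (M : Matrix m n R) (c : R) (hM : Mᵀ * M = c • 1)
    (x y : n → R) : (M *ᵥ x) ⬝ᵥ (M *ᵥ y) = c * (x ⬝ᵥ y) := by
  rw [← vecMul_transpose, ← dotProduct_mulVec, mulVec_mulVec, hM, smul_mulVec, one_mulVec,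
    dotProduct_smul, smul_eq_mul]

lemma trace_diagonal_mul_conjTranspose_mul_diagonal_mul {m : Type*} [Fintype m]
    [DecidableEq m] (C : Matrix m m ℂ) (d e : m → ℝ) :
    (diagonal (fun w => (d w : ℂ)) * Cᴴ * diagonal (fun z => (e z : ℂ)) * C).trace =
      ((∑ w, ∑ z, d w * e z * ‖C z w‖ ^ 2 : ℝ) : ℂ) := by
  simp only [trace, diag, mul_apply, conjTranspose_apply, diagonal_apply, ite_mul, zero_mul,
    mul_ite, mul_zero, Finset.sum_ite_eq, Finset.sum_ite_eq', Finset.mem_univ, if_true]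
  push_cast
  refine Finset.sum_congr rfl fun w _ => Finset.sum_congr rfl fun z _ => ?_
  rw [← Complex.conj_mul', RCLike.star_def]
  ring

section Walsh

variable {ι : Type*} [Fintype ι] [DecidableEq ι]

lemma sum_signOf_dotProduct (v : ι → ZMod 2) :
    ∑ s : ι → ZMod 2, signOf (s ⬝ᵥ v) = if v = 0 then 2 ^ Fintype.card ι else 0 := by
  split_ifs with hv
  · simp [hv, signOf]
  obtain ⟨i, hi⟩ : ∃ i, v i ≠ 0 := Function.ne_iff.mp hv
  have hflip : ∀ s, signOf ((s + Pi.single i 1) ⬝ᵥ v) = -signOf (s ⬝ᵥ v) := by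
    intro s
    rw [add_dotProduct, single_dotProduct, (zmod_two_eq_zero_or_eq_one _).resolve_left hi,
      one_mul, signOf_add]
    simp [signOf]
  have hsum : ∑ s : ι → ZMod 2, signOf ((s + Pi.single i 1) ⬝ᵥ v) =
      ∑ s : ι → ZMod 2, signOf (s ⬝ᵥ v) :=
    Equiv.sum_comp (Equiv.addRight (Pi.single i 1 : ι → ZMod 2)) fun s => signOf (s ⬝ᵥ v)
  simp only [hflip, Finset.sum_neg_distrib] at hsum
  linarith

variable (ι) in
def walshMatrix : Matrix (ι → ZMod 2) (ι → ZMod 2) ℝ := of fun s w => signOf (s ⬝ᵥ w)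

lemma walshMatrix_transpose_mul_self :
    (walshMatrix ι)ᵀ * walshMatrix ι = (2 ^ Fintype.card ι : ℝ) • 1 := by
  ext w w'
  have hchar : w + w' = 0 ↔ w = w' := by
    simp only [funext_iff, Pi.add_apply, Pi.zero_apply, CharTwo.add_eq_zero]
  simp only [mul_apply, transpose_apply, walshMatrix, of_apply, ← signOf_add, ← dotProduct_add,
    sum_signOf_dotProduct, hchar, Matrix.smul_apply, one_apply, smul_eq_mul, mul_ite, mul_one,
    mul_zero]

lemma walshMatrix_kronecker_transpose_mul_self :
    (walshMatrix ι ⊗ₖ walshMatrix ι)ᵀ * (walshMatrix ι ⊗ₖ walshMatrix ι) =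
      (2 ^ (2 * Fintype.card ι) : ℝ) • 1 := by
  rw [← kroneckerMap_transpose, ← mul_kronecker_mul, walshMatrix_transpose_mul_self,
    smul_kronecker, kronecker_smul, one_kronecker_one, smul_smul, ← pow_add, two_mul]

lemma sum_sum_signOf_mul_sum_sum_signOf (F G : (ι → ZMod 2) → (ι → ZMod 2) → ℝ) :
    ∑ s, ∑ s', (∑ w, ∑ z, F w z * signOf (s ⬝ᵥ w) * signOf (s' ⬝ᵥ z)) *
        (∑ w, ∑ z, signOf (s ⬝ᵥ w) * signOf (s' ⬝ᵥ z) * G w z) =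
      2 ^ (2 * Fintype.card ι) * ∑ w, ∑ z, F w z * G w z := by
  have h := dotProduct_mulVec_mulVec_eq_of_transpose_mul_self _ _
    walshMatrix_kronecker_transpose_mul_self (Function.uncurry F) (Function.uncurry G)
  simp only [dotProduct, mulVec, kronecker_apply, walshMatrix, of_apply, Fintype.sum_prod_type,
    Function.uncurry_apply_pair] at h
  convert h using 6
  · simp only [dotProduct]
    ring
  · simp only [dotProduct]

end Walsh

theorem half_bqp_fourier_representation (n : ℕ)
    (C : Matrix (Fin n → ZMod 2) (Fin n → ZMod 2) ℂ)
    (f : (Fin n → ZMod 2) × (Fin n → ZMod 2) → ℝ) :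
    (((1 / 2 ^ n) * ∑ w, ∑ z, ‖C z w‖ ^ 2 * f (w, z) : ℝ) : ℂ) =
      ∑ s, ∑ s',
        (((2 : ℝ) ^ (2 * n))⁻¹ *
            ∑ w, ∑ z, f (w, z) * signOf (s ⬝ᵥ w) * signOf (s' ⬝ᵥ z) : ℝ) *
          ((1 / 2 ^ n : ℂ) *
            (Matrix.diagonal (fun w => (signOf (s ⬝ᵥ w) : ℂ)) * Cᴴ *
                Matrix.diagonal (fun z => (signOf (s' ⬝ᵥ z) : ℂ)) * C).trace) := by
  have hparseval : 1 / 2 ^ n * ∑ w, ∑ z, ‖C z w‖ ^ 2 * f (w, z) =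
      ∑ s, ∑ s',
        ((2 : ℝ) ^ (2 * n))⁻¹ * (∑ w, ∑ z, f (w, z) * signOf (s ⬝ᵥ w) * signOf (s' ⬝ᵥ z)) *
          (1 / 2 ^ n * ∑ w, ∑ z, signOf (s ⬝ᵥ w) * signOf (s' ⬝ᵥ z) * ‖C z w‖ ^ 2) := by
    simp_rw [mul_mul_mul_comm, ← Finset.mul_sum, sum_sum_signOf_mul_sum_sum_signOf,
      Fintype.card_fin]
    field_simp
    simp_rw [mul_comm]
  rw [hparseval]
  push_cast
  refine Finset.sum_congr rfl fun s _ => Finset.sum_congr rfl fun s' _ => ?_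
  rw [trace_diagonal_mul_conjTranspose_mul_diagonal_mul]
  push_cast
  rfl
end

section
/- Let Q and r be positive integers with r dividing Q, let X be a type, and let f : ZMod Q → X satisfy the period-r promise: for all a, b ∈ ZMod Q, f(a) = f(b) if and only if a − b lies in the subgroup of ZMod Q generated by r. Let ω = exp(2πi/Q). Then for every u ∈ ZMod Q: (1/Q²) Σ_{z ∈ range(f)} | Σ_{x : f(x) = z} ω^{x·u} |² equals 1/r if u lies in the subgroup of ZMod Q generated by Q/r, and equals 0 otherwise. -/
/-!
Under the promise, the fibre of `f` through `a` is the coset `a + H` of `H = ⟨r⟩`, and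
`x ↦ ω ^ (x u)` is the additive character `ψ_u x = exp (2πi u x / Q)` of `ZMod Q`. Hence the
sum over a fibre is `ψ_u a * ∑_{h ∈ H} ψ_u h`, whose norm is that of the character sum over `H`.
This sum is `|H| = Q / r` when `ψ_u` is trivial on `H`, i.e. when `r u = 0`, i.e. when
`u ∈ ⟨Q / r⟩`, and vanishes otherwise. There are `r` fibres, so the total is
`r (Q / r)² / Q² = 1 / r` or `0`.
-/

open Finset

namespace AddChar

lemma forall_mem_zmultiples_eq_one_iff {A M : Type*} [AddGroup A] [DivisionMonoid M]
    (ψ : AddChar A M) (g : A) :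
    (∀ h ∈ AddSubgroup.zmultiples g, ψ h = 1) ↔ ψ g = 1 := by
  refine ⟨fun h => h g (AddSubgroup.mem_zmultiples g), fun hg h hh => ?_⟩
  obtain ⟨k, rfl⟩ := AddSubgroup.mem_zmultiples_iff.mp hh
  rw [map_zsmul_eq_zpow, hg, one_zpow]

variable {G R : Type*} [AddCommGroup G] [Fintype G] [CommSemiring R]
  (ψ : AddChar G R) (H : AddSubgroup G) [DecidablePred (· ∈ H)]

lemma sum_filter_sub_mem (a : G) :
    ∑ x with x - a ∈ H, ψ x = ψ a * ∑ h with h ∈ H, ψ h := by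
  rw [sum_filter, sum_filter, mul_sum]
  refine Fintype.sum_equiv (Equiv.subRight a) _ _ fun x => ?_
  simp only [Equiv.subRight_apply, mul_ite, mul_zero, ← map_add_eq_mul, add_sub_cancel]

lemma sum_filter_mem_of_forall_eq_one (hψ : ∀ h ∈ H, ψ h = 1) :
    ∑ h with h ∈ H, ψ h = Nat.card H := by
  rw [sum_congr rfl fun h hh => hψ h (mem_filter_univ h |>.mp hh), sum_const, nsmul_one,
    Nat.card_eq_fintype_card, Fintype.card_subtype]

lemma sum_filter_mem_eq_zero [IsDomain R] (hψ : ¬ ∀ h ∈ H, ψ h = 1) :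
    ∑ h with h ∈ H, ψ h = 0 := by
  classical
  rw [sum_subtype _ fun _ => mem_filter_univ _]
  refine (sum_eq_ite (ψ.compAddMonoidHom H.subtype)).trans (if_neg ?_)
  simpa [eq_zero_iff] using hψ

end AddChar

section PeriodicFunction

variable {G X : Type*} [AddCommGroup G] [Fintype G] [DecidableEq X]
  {H : AddSubgroup G} [DecidablePred (· ∈ H)] {f : G → X}

lemma card_filter_sub_mem (a : G) : #{x | x - a ∈ H} = Nat.card H := by
  rw [Nat.card_eq_fintype_card, Fintype.card_subtype]
  exact card_nbij' (· - a) (· + a) (fun x hx => by simpa using hx) (fun h hh => by simpa using hh)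
    (fun x _ => sub_add_cancel x a) (fun h _ => add_sub_cancel_right h a)

variable (hf : ∀ a b, f a = f b ↔ a - b ∈ H)
include hf

lemma filter_apply_eq_apply_eq (a : G) :
    univ.filter (fun x => f x = f a) = univ.filter (fun x => x - a ∈ H) :=
  filter_congr fun x _ => hf x a

lemma card_image_mul_card_eq : #(univ.image f) * Nat.card H = Fintype.card G := by
  rw [← card_univ, card_eq_sum_card_image f univ, ← smul_eq_mul, ← sum_const]
  refine sum_congr rfl fun z hz => ?_
  obtain ⟨a, -, rfl⟩ := mem_image.mp hz
  rw [filter_apply_eq_apply_eq hf, card_filter_sub_mem]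

lemma sum_image_norm_sq_sum_fiber (ψ : AddChar G ℂ) :
    ∑ z ∈ univ.image f, ‖∑ x with f x = z, ψ x‖ ^ 2 =
      #(univ.image f) * ‖∑ h with h ∈ H, ψ h‖ ^ 2 := by
  rw [← nsmul_eq_mul, ← sum_const]
  refine sum_congr rfl fun z hz => ?_
  obtain ⟨a, -, rfl⟩ := mem_image.mp hz
  rw [filter_apply_eq_apply_eq hf, AddChar.sum_filter_sub_mem, norm_mul, AddChar.norm_apply,
    one_mul]

end PeriodicFunction

namespace ZMod

variable {N : ℕ} [NeZero N]

lemma cexp_pow_val_mul_val (x u : ZMod N) :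
    Complex.exp (2 * Real.pi * Complex.I / N) ^ (x.val * u.val) = stdAddChar.mulShift u x := by
  have hux : u * x = ((x.val * u.val : ℕ) : ZMod N) := by
    rw [Nat.cast_mul, natCast_zmod_val, natCast_zmod_val, mul_comm]
  rw [AddChar.mulShift_apply, hux, stdAddChar_apply, toCircle_natCast, ← Complex.exp_nat_mul]
  ring_nf

lemma stdAddChar_eq_one_iff (x : ZMod N) : stdAddChar x = 1 ↔ x = 0 :=
  injective_stdAddChar.eq_iff' (AddChar.map_zero_eq_one _)

lemma card_zmultiples_natCast {r : ℕ} (hr : r ∣ N) :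
    Nat.card (AddSubgroup.zmultiples (r : ZMod N)) = N / r := by
  rw [Nat.card_zmultiples, addOrderOf_coe _ (NeZero.ne N), Nat.gcd_eq_right hr]

lemma mul_natCast_eq_zero_iff_mem_zmultiples {r : ℕ} (hr : r ∣ N) (u : ZMod N) :
    u * r = 0 ↔ u ∈ AddSubgroup.zmultiples ((N / r : ℕ) : ZMod N) := by
  obtain ⟨m, rfl⟩ := hr
  have hr0 : r ≠ 0 := left_ne_zero_of_mul (NeZero.ne (r * m))
  rw [Nat.mul_div_cancel_left m (Nat.pos_of_ne_zero hr0), AddSubgroup.mem_zmultiples_iff]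
  obtain ⟨n, rfl⟩ := intCast_surjective u
  constructor
  · intro h
    rw [← Int.cast_natCast, ← Int.cast_mul, intCast_zmod_eq_zero_iff_dvd, Nat.cast_mul,
      mul_comm (r : ℤ), mul_dvd_mul_iff_right (by exact_mod_cast hr0)] at h
    obtain ⟨k, rfl⟩ := h
    exact ⟨k, by push_cast; ring⟩
  · rintro ⟨k, hk⟩
    rw [← hk, zsmul_eq_mul, mul_assoc, ← Nat.cast_mul, mul_comm m, natCast_self, mul_zero]

end ZMod

theorem half_bqp_period_finding_measurement_distribution_general {X : Type*} [DecidableEq X]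
    (Q r : ℕ) [NeZero Q] (hrQ : r ∣ Q)
    (f : ZMod Q → X)
    (hf : ∀ a b, f a = f b ↔ a - b ∈ AddSubgroup.zmultiples ((r : ℕ) : ZMod Q))
    (u : ZMod Q) :
    (u ∈ AddSubgroup.zmultiples ((Q / r : ℕ) : ZMod Q) →
        (1 / (Q : ℝ) ^ 2) *
            ∑ z ∈ Finset.univ.image f,
              ‖(∑ x ∈ Finset.univ.filter fun x => f x = z,
                    Complex.exp (2 * Real.pi * Complex.I / Q) ^ (x.val * u.val))‖ ^ 2 =
          1 / r) ∧
      (u ∉ AddSubgroup.zmultiples ((Q / r : ℕ) : ZMod Q) →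
        (1 / (Q : ℝ) ^ 2) *
            ∑ z ∈ Finset.univ.image f,
              ‖(∑ x ∈ Finset.univ.filter fun x => f x = z,
                    Complex.exp (2 * Real.pi * Complex.I / Q) ^ (x.val * u.val))‖ ^ 2 =
          0) := by
  classical
  have hr : 0 < r := Nat.pos_of_dvd_of_pos hrQ (Nat.pos_of_neZero Q)
  have hcard : #(univ.image f) = r := by
    refine Nat.eq_of_mul_eq_mul_right (Nat.div_pos (Nat.le_of_dvd (Nat.pos_of_neZero Q) hrQ) hr) ?_
    rw [← ZMod.card_zmultiples_natCast hrQ, card_image_mul_card_eq hf, ZMod.card,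
      ZMod.card_zmultiples_natCast hrQ, Nat.mul_div_cancel' hrQ]
  have htrivial :
      (∀ h ∈ AddSubgroup.zmultiples (r : ZMod Q), ZMod.stdAddChar.mulShift u h = 1) ↔
        u ∈ AddSubgroup.zmultiples ((Q / r : ℕ) : ZMod Q) := by
    rw [AddChar.forall_mem_zmultiples_eq_one_iff, AddChar.mulShift_apply,
      ZMod.stdAddChar_eq_one_iff, ZMod.mul_natCast_eq_zero_iff_mem_zmultiples hrQ]
  simp_rw [ZMod.cexp_pow_val_mul_val, sum_image_norm_sq_sum_fiber hf, hcard]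
  constructor
  · intro hu
    rw [AddChar.sum_filter_mem_of_forall_eq_one _ _ (htrivial.mpr hu),
      ZMod.card_zmultiples_natCast hrQ, Complex.norm_natCast, Nat.cast_div hrQ (by positivity)]
    field_simp [NeZero.ne Q]
  · intro hu
    rw [AddChar.sum_filter_mem_eq_zero _ _ (htrivial.not.mpr hu)]
    simp

theorem half_bqp_period_finding_measurement_distribution {X : Type*} [DecidableEq X]
    (Q r : ℕ) [NeZero Q] (hr : 0 < r) (hrQ : r ∣ Q)
    (f : ZMod Q → X)
    (hf : ∀ a b, f a = f b ↔ a - b ∈ AddSubgroup.zmultiples ((r : ℕ) : ZMod Q))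
    (u : ZMod Q) :
    (u ∈ AddSubgroup.zmultiples ((Q / r : ℕ) : ZMod Q) →
        (1 / (Q : ℝ) ^ 2) *
            ∑ z ∈ Finset.univ.image f,
              ‖(∑ x ∈ Finset.univ.filter fun x => f x = z,
                    Complex.exp (2 * Real.pi * Complex.I / Q) ^ (x.val * u.val))‖ ^ 2 =
          1 / r) ∧
      (u ∉ AddSubgroup.zmultiples ((Q / r : ℕ) : ZMod Q) →
        (1 / (Q : ℝ) ^ 2) *
            ∑ z ∈ Finset.univ.image f,
              ‖(∑ x ∈ Finset.univ.filter fun x => f x = z,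
                    Complex.exp (2 * Real.pi * Complex.I / Q) ^ (x.val * u.val))‖ ^ 2 =
          0) :=
  half_bqp_period_finding_measurement_distribution_general Q r hrQ f hf u
end
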